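/- Let ω_1,…,ω_n be a gauge of a connection over ℝⁿ that is radial centered at 0, and suppose there exist an integer m ≥ 2 and constants K, r > 0 such that ‖Ω_{ij}(z)‖ ≤ K |z|^{m−2} for all i, j and all |z| ≤ r. Then ‖ω_j(z)‖ ≤ (n K / m) |z|^{m−1} for every j and every z with |z| ≤ r. -/

import Mathlib

open MeasureTheory Set

noncomputable section

attribute [local instance] Matrix.frobeniusNormedAddCommGroup Matrix.frobeniusNormedRing
  Matrix.frobeniusNormedSpace

/-- The algebra of `q × q` complex matrices, equipped (locally) with the Frobenius norm,
which is submultiplicative. -/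
abbrev Mat (q : ℕ) := Matrix (Fin q) (Fin q) ℂ

/-- `ℝⁿ` with the Euclidean norm. -/
abbrev Euc (n : ℕ) := EuclideanSpace ℝ (Fin n)

/-- The partial derivative `∂ₖ f` of a matrix-valued map on `ℝⁿ`. -/
def pd {q n : ℕ} (f : Euc n → Mat q) (k : Fin n) (z : Euc n) : Mat q :=
  fderiv ℝ f z (EuclideanSpace.single k 1)

/-- The curvature components `Ω i j = ∂_i ω_j - ∂_j ω_i + [ω_i, ω_j]` of a gauge `ω`. -/
def curv {q n : ℕ} (ω : Fin n → Euc n → Mat q) (i j : Fin n) (z : Euc n) : Mat q :=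
  pd (ω j) i z - pd (ω i) j z + (ω i z * ω j z - ω j z * ω i z)

/-- The covariant derivative `∇ₖ Φ = ∂ₖ Φ + [ωₖ, Φ]`. -/
def covD {q n : ℕ} (ω : Fin n → Euc n → Mat q) (k : Fin n) (Φ : Euc n → Mat q) :
    Euc n → Mat q :=
  fun z => pd Φ k z + (ω k z * Φ z - Φ z * ω k z)

/-- The iterated covariant derivative `∇_μ Φ = ∇_{μ₁} ⋯ ∇_{μⱼ} Φ` for a tuple
`μ = (μ₁, …, μⱼ)`, encoded as a list. -/
def covDIter {q n : ℕ} (ω : Fin n → Euc n → Mat q) (μ : List (Fin n))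
    (Φ : Euc n → Mat q) : Euc n → Mat q :=
  μ.foldr (fun k Ψ => covD ω k Ψ) Φ

/-- The length `ℓ(γ) = ∫₀¹ |γ'(t)| dt` of a (Lipschitz) curve. -/
def len {n : ℕ} (γ : ℝ → Euc n) : ℝ := ∫ t in (0:ℝ)..1, ‖deriv γ t‖

/-- The integral `∫_{disk(γ)} α = ∫₀¹∫₀¹ s Σ_{i,j} α_{ij}(x + s(γ(t)-x)) (γᵢ(t)-xᵢ) γⱼ'(t) ds dt`
of the two-form with components `α` over the radial disk of `γ` centered at `x`. -/
def diskInt {q n : ℕ} (α : Fin n → Fin n → Euc n → Mat q) (x : Euc n) (γ : ℝ → Euc n) :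
    Mat q :=
  ∫ s in (0:ℝ)..1, ∫ t in (0:ℝ)..1,
    s • ∑ i, ∑ j, ((γ t i - x i) * deriv (fun u => γ u j) t) •
      α i j (x + s • (γ t - x))

/-- `a : [0,1] → M_q(ℂ)` solves (in integral form) the holonomy ODE
`a' = -(Σᵢ ωᵢ(γ(t)) γᵢ'(t)) a`, `a(0) = I`; the holonomy of `γ` is then `a 1`. -/
def IsHolSol {q n : ℕ} (ω : Fin n → Euc n → Mat q) (γ : ℝ → Euc n) (a : ℝ → Mat q) : Prop :=
  Continuous a ∧ a 0 = 1 ∧ ∀ t ∈ Icc (0:ℝ) 1,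
    a t = 1 - ∫ s in (0:ℝ)..t, (∑ i, deriv (fun u => γ u i) s • ω i (γ s)) * a s

/-- `γ` is a Lipschitz loop based at `x`. -/
def IsLoopAt {n : ℕ} (γ : ℝ → Euc n) (x : Euc n) : Prop :=
  (∃ K : NNReal, LipschitzOnWith K γ (Icc 0 1)) ∧ γ 0 = x ∧ γ 1 = x

lemma sum_single_smul {n : ℕ} (z : Euc n) :
    (∑ i, z i • EuclideanSpace.single i (1:ℝ)) = z := by
  ext k
  rw [show (∑ i, z i • EuclideanSpace.single i (1:ℝ)) k
      = ∑ i, (z i • EuclideanSpace.single i (1:ℝ)) k from by rw [WithLp.ofLp_sum]; exact Finset.sum_apply k _ _]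
  simp [EuclideanSpace.single_apply]

lemma abs_apply_le {n : ℕ} (z : Euc n) (i : Fin n) : |z i| ≤ ‖z‖ := by
  rw [EuclideanSpace.norm_eq]
  calc |z i| = Real.sqrt (‖z i‖ ^ 2) := by
        rw [Real.sqrt_sq_eq_abs, Real.norm_eq_abs, abs_abs]
    _ ≤ _ := Real.sqrt_le_sqrt (Finset.single_le_sum (f := fun j => ‖z j‖^2)
        (fun j _ => sq_nonneg _) (Finset.mem_univ i))

lemma radial_deriv {q n : ℕ} (ω : Fin n → Euc n → Mat q) (hω : ∀ i, ContDiff ℝ (⊤ : ℕ∞) (ω i))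
    (hrad : ∀ z : Euc n, ∑ i, z i • ω i z = 0) (y v : Euc n) :
    (∑ i, v i • ω i y) + ∑ i, y i • (fderiv ℝ (ω i) y v) = 0 := by
  have hD : ∀ i : Fin n, HasFDerivAt (fun z : Euc n => z i • ω i z)
      ((y i : ℝ) • fderiv ℝ (ω i) y
        + (EuclideanSpace.proj (𝕜 := ℝ) i).smulRight (ω i y)) y := fun i =>
    ((EuclideanSpace.proj (𝕜 := ℝ) i).hasFDerivAt).smul
      (((hω i).differentiable (by simp) y).hasFDerivAt)
  have hsum : HasFDerivAt (fun z : Euc n => ∑ i, z i • ω i z)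
      (∑ i, ((y i : ℝ) • fderiv ℝ (ω i) y
        + (EuclideanSpace.proj (𝕜 := ℝ) i).smulRight (ω i y))) y :=
    HasFDerivAt.fun_sum (fun i _ => hD i)
  have h0 : HasFDerivAt (fun z : Euc n => ∑ i, z i • ω i z) (0 : Euc n →L[ℝ] Mat q) y := by
    have hz : (fun z : Euc n => ∑ i, z i • ω i z) = fun _ => (0 : Mat q) := funext hrad
    rw [hz]; exact hasFDerivAt_const 0 y
  have huniq := hsum.unique h0
  have happ : (∑ i, ((y i : ℝ) • fderiv ℝ (ω i) y
      + (EuclideanSpace.proj (𝕜 := ℝ) i).smulRight (ω i y))) v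
      = (0 : Euc n →L[ℝ] Mat q) v := by rw [huniq]
  simp only [ContinuousLinearMap.sum_apply, ContinuousLinearMap.add_apply,
    ContinuousLinearMap.smul_apply, ContinuousLinearMap.smulRight_apply,
    PiLp.proj_apply, ContinuousLinearMap.zero_apply] at happ
  rw [Finset.sum_add_distrib] at happ
  rw [add_comm]
  exact happ

lemma key0 {q n : ℕ} (ω : Fin n → Euc n → Mat q) (hω : ∀ i, ContDiff ℝ (⊤ : ℕ∞) (ω i))
    (hrad : ∀ z : Euc n, ∑ i, z i • ω i z = 0) (j : Fin n) (Y : Euc n) :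
    ∑ i, Y i • curv ω i j Y = fderiv ℝ (ω j) Y Y + ω j Y := by
  have hA : fderiv ℝ (ω j) Y Y = ∑ i, Y i • pd (ω j) i Y := by
    have h0 : fderiv ℝ (ω j) Y Y
        = fderiv ℝ (ω j) Y (∑ i, Y i • EuclideanSpace.single i (1:ℝ)) := by
      rw [sum_single_smul]
    rw [h0, map_sum]
    exact Finset.sum_congr rfl fun i _ => by
      rw [(fderiv ℝ (ω j) Y).map_smul]; rfl
  have hB' : ∑ i, Y i • pd (ω i) j Y = -(ω j Y) := by
    have hB := radial_deriv ω hω hrad Y (EuclideanSpace.single j 1)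
    have h1 : (∑ i, (EuclideanSpace.single j (1:ℝ) : Euc n) i • ω i Y) = ω j Y := by
      simp [EuclideanSpace.single_apply]
    rw [h1] at hB
    simp only [pd]
    rw [add_comm] at hB
    exact eq_neg_of_add_eq_zero_left hB
  have hC1 : ∑ i, Y i • (ω i Y * ω j Y) = 0 := by
    rw [show ∑ i, Y i • (ω i Y * ω j Y) = (∑ i, Y i • ω i Y) * ω j Y from by
      rw [Finset.sum_mul]; exact Finset.sum_congr rfl fun i _ => (smul_mul_assoc _ _ _).symm]
    rw [hrad Y, zero_mul]
  have hC2 : ∑ i, Y i • (ω j Y * ω i Y) = 0 := by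
    rw [show ∑ i, Y i • (ω j Y * ω i Y) = ω j Y * (∑ i, Y i • ω i Y) from by
      rw [Finset.mul_sum]; exact Finset.sum_congr rfl fun i _ => (mul_smul_comm _ _ _).symm]
    rw [hrad Y, mul_zero]
  calc ∑ i, Y i • curv ω i j Y
      = ∑ i, (Y i • pd (ω j) i Y - Y i • pd (ω i) j Y
          + (Y i • (ω i Y * ω j Y) - Y i • (ω j Y * ω i Y))) := by
        refine Finset.sum_congr rfl fun i _ => ?_
        simp only [curv, smul_add, smul_sub]
    _ = (∑ i, Y i • pd (ω j) i Y) - (∑ i, Y i • pd (ω i) j Y)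
          + ((∑ i, Y i • (ω i Y * ω j Y)) - ∑ i, Y i • (ω j Y * ω i Y)) := by
        rw [Finset.sum_add_distrib, Finset.sum_sub_distrib, Finset.sum_sub_distrib]
    _ = fderiv ℝ (ω j) Y Y + ω j Y := by rw [← hA, hB', hC1, hC2]; abel

/-- For a gauge radial centered at `0` with `‖Ω_{ij}(z)‖ ≤ K |z|^{m-2}`
for `|z| ≤ r` (with `m ≥ 2`), one has `‖ω_j(z)‖ ≤ (nK/m) |z|^{m-1}` for all `|z| ≤ r`. -/
theorem stmt10 (q n : ℕ) (hq : 1 ≤ q) (hn : 1 ≤ n)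
    (ω : Fin n → Euc n → Mat q) (hω : ∀ i, ContDiff ℝ (⊤ : ℕ∞) (ω i))
    (hrad : ∀ z : Euc n, ∑ i, z i • ω i z = 0)
    (m : ℕ) (hm : 2 ≤ m)
    (K r : ℝ) (hK : 0 < K) (hr : 0 < r)
    (hbound : ∀ i j : Fin n, ∀ z : Euc n, ‖z‖ ≤ r →
      ‖curv ω i j z‖ ≤ K * ‖z‖ ^ (m - 2)) :
    ∀ j : Fin n, ∀ z : Euc n, ‖z‖ ≤ r →
      ‖ω j z‖ ≤ (n * K / m) * ‖z‖ ^ (m - 1) := by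
  intro j z hz
  have hdiff : ∀ i, Differentiable ℝ (ω i) := fun i => (hω i).differentiable (by simp)
  set G : ℝ → Mat q := fun s => s • ∑ i, z i • curv ω i j (s • z) with hG
  have hGs : ∀ s : ℝ, G s = s • ∑ i, z i • curv ω i j (s • z) := fun s => rfl
  -- the line s ↦ s • z
  have hline : ∀ s : ℝ, HasDerivAt (fun s : ℝ => s • z) z s := fun s => by
    simpa using (hasDerivAt_id s).smul_const z
  have hw : ∀ s : ℝ, HasDerivAt (fun u : ℝ => ω j (u • z)) (fderiv ℝ (ω j) (s • z) z) s :=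
    fun s => (hdiff j (s • z)).hasFDerivAt.comp_hasDerivAt s (hline s)
  -- key identity for the derivative of F s = s • ω j (s • z)
  have hkey : ∀ s : ℝ, G s = s • fderiv ℝ (ω j) (s • z) z + (1 : ℝ) • ω j (s • z) := by
    intro s
    have h0 := key0 ω hω hrad j (s • z)
    have h1 : ∑ i, (s • z : Euc n) i • curv ω i j (s • z)
        = s • ∑ i, z i • curv ω i j (s • z) := by
      rw [Finset.smul_sum]
      refine Finset.sum_congr rfl fun i _ => ?_
      rw [PiLp.smul_apply, smul_eq_mul, mul_smul]
    rw [hGs s, ← h1, h0, one_smul, (fderiv ℝ (ω j) (s • z)).map_smul]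
  have hF : ∀ s ∈ uIcc (0:ℝ) 1, HasDerivAt (fun u : ℝ => u • ω j (u • z)) (G s) s := by
    intro s _
    rw [hkey s]
    exact (hasDerivAt_id s).smul (hw s)
  -- continuity of G
  have hcont_fd : ∀ i : Fin n, Continuous (fun Y : Euc n => fderiv ℝ (ω i) Y) :=
    fun i => ((hω i).fderiv_right (m := (⊤ : ℕ∞)) (by simp)).continuous
  have hcurvc : ∀ i : Fin n, Continuous (curv ω i j) := by
    intro i
    have h1 : Continuous (fun Y : Euc n => pd (ω j) i Y) :=
      (hcont_fd j).clm_apply continuous_const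
    have h2 : Continuous (fun Y : Euc n => pd (ω i) j Y) :=
      (hcont_fd i).clm_apply continuous_const
    exact (h1.sub h2).add
      (((hω i).continuous.mul (hω j).continuous).sub ((hω j).continuous.mul (hω i).continuous))
  have hGc : Continuous G := by
    rw [hG]
    exact continuous_id.smul (continuous_finset_sum _ fun i _ =>
      ((hcurvc i).comp (continuous_id.smul continuous_const)).const_smul (z i))
  -- FTC
  have hwz : ω j z = ∫ s in (0:ℝ)..1, G s := by
    rw [intervalIntegral.integral_eq_sub_of_hasDerivAt hF (hGc.intervalIntegrable 0 1)]
    simp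
  have hm1 : m - 2 + 1 = m - 1 := by omega
  have hm2 : m - 1 + 1 = m := by omega
  set C : ℝ := n * K * ‖z‖ ^ (m - 1) with hC
  have hGle : ∀ s ∈ Icc (0:ℝ) 1, ‖G s‖ ≤ C * s ^ (m - 1) := by
    intro s hs
    obtain ⟨hs0, hs1⟩ := hs
    have hsz : ‖s • z‖ = s * ‖z‖ := by
      rw [norm_smul, Real.norm_eq_abs, abs_of_nonneg hs0]
    have hzr' : ‖s • z‖ ≤ r := by
      rw [hsz]
      calc s * ‖z‖ ≤ 1 * ‖z‖ := mul_le_mul_of_nonneg_right hs1 (norm_nonneg z)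
        _ ≤ r := by rw [one_mul]; exact hz
    have h1 : ∀ i : Fin n, ‖z i • curv ω i j (s • z)‖
        ≤ ‖z‖ * (K * (s ^ (m - 2) * ‖z‖ ^ (m - 2))) := by
      intro i
      rw [norm_smul, Real.norm_eq_abs]
      have hb := hbound i j (s • z) hzr'
      have h2 : ‖s • z‖ ^ (m - 2) = s ^ (m - 2) * ‖z‖ ^ (m - 2) := by
        rw [hsz, mul_pow]
      rw [h2] at hb
      rw [show ‖z‖ * (K * (s ^ (m - 2) * ‖z‖ ^ (m - 2)))
          = ‖z‖ * (K * (s ^ (m - 2) * ‖z‖ ^ (m - 2))) from rfl]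
      exact mul_le_mul (abs_apply_le z i) hb (norm_nonneg _) (norm_nonneg z)
    calc ‖G s‖ = |s| * ‖∑ i, z i • curv ω i j (s • z)‖ := by
          rw [hGs s, norm_smul, Real.norm_eq_abs]
      _ ≤ s * ∑ i, ‖z i • curv ω i j (s • z)‖ := by
          rw [abs_of_nonneg hs0]
          exact mul_le_mul_of_nonneg_left (norm_sum_le _ _) hs0
      _ ≤ s * ∑ _i : Fin n, ‖z‖ * (K * (s ^ (m - 2) * ‖z‖ ^ (m - 2))) :=
          mul_le_mul_of_nonneg_left (Finset.sum_le_sum fun i _ => h1 i) hs0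
      _ = C * s ^ (m - 1) := by
          rw [Finset.sum_const, Finset.card_univ, Fintype.card_fin, nsmul_eq_mul, hC,
            ← hm1, pow_succ, pow_succ]
          ring
  have hnorm : ‖ω j z‖ ≤ ∫ s in (0:ℝ)..1, C * s ^ (m - 1) := by
    rw [hwz]
    calc ‖∫ s in (0:ℝ)..1, G s‖ ≤ ∫ s in (0:ℝ)..1, ‖G s‖ :=
          intervalIntegral.norm_integral_le_integral_norm zero_le_one
      _ ≤ ∫ s in (0:ℝ)..1, C * s ^ (m - 1) :=
          intervalIntegral.integral_mono_on zero_le_one (hGc.norm.intervalIntegrable 0 1)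
            ((continuous_const.mul (continuous_pow _)).intervalIntegrable 0 1) hGle
  have hval : ∫ s in (0:ℝ)..1, C * s ^ (m - 1) = C / m := by
    rw [intervalIntegral.integral_const_mul, integral_pow]
    have h0 : (0:ℝ) ^ (m - 1 + 1) = 0 := by
      rw [hm2]; exact zero_pow (by omega)
    have hcast : ((m - 1 : ℕ) : ℝ) + 1 = (m : ℝ) := by
      exact_mod_cast congrArg (fun k : ℕ => (k : ℝ)) hm2
    rw [one_pow, h0, sub_zero, hcast]; ring
  rw [hval] at hnorm
  calc ‖ω j z‖ ≤ C / m := hnorm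
    _ = (n * K / m) * ‖z‖ ^ (m - 1) := by rw [hC]; ring

end
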